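/- arXiv:1806.00815 — 2 statements merged into one kernel-verified Lean document; each statement's English description precedes it below -/
import Mathlib

section
/- Let A₁ ∈ ℂ^{M₁×N₁} and A₂ ∈ ℂ^{M₂×N₂}, and let the Kronecker product A = A₁ ⊗ A₂ ∈ ℂ^{M₁M₂×N₁N₂} act on 3-level block vectors in ℂ^{N₁'·N₂'·N₃'} where N₁ = N₁' and N₂ = N₂'N₃' (so the level-1 blocks of size N₂ correspond to the columns of A₁). Then for any tuple s = (s₁,s₂,s₃) of positive integers with s₁ ≤ N₁', s₂ ≤ N₂', s₃ ≤ N₃', the hierarchical restricted isometry constant satisfies δ_{(s₁,s₂,s₃)}(A₁ ⊗ A₂) ≤ (1 + δ_{s₁}(A₁))(1 + δ_{s₂s₃}(A₂)) − 1. -/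
open scoped Classical

noncomputable section

/-- A vector is `s`-sparse if at most `s` of its entries are nonzero. -/
def Sparse {ι : Type*} [Fintype ι] (s : ℕ) (x : ι → ℂ) : Prop :=
  (Finset.univ.filter fun i => x i ≠ 0).card ≤ s

/-- Squared Euclidean norm. -/
def sqNorm {ι : Type*} [Fintype ι] (x : ι → ℂ) : ℝ := ∑ i, ‖x i‖ ^ 2

/-- Euclidean norm. -/
def enorm {ι : Type*} [Fintype ι] (x : ι → ℂ) : ℝ := Real.sqrt (sqNorm x)

/-- The restricted isometry constant `δ_s(A)`: the smallest `δ ≥ 0` such that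
`(1−δ)‖x‖² ≤ ‖Ax‖² ≤ (1+δ)‖x‖²` for every `s`-sparse `x`. -/
def RIPconst {m n : Type*} [Fintype m] [Fintype n] (A : Matrix m n ℂ) (s : ℕ) : ℝ :=
  sInf {δ : ℝ | 0 ≤ δ ∧ ∀ x : n → ℂ, Sparse s x →
    (1 - δ) * sqNorm x ≤ sqNorm (A.mulVec x) ∧ sqNorm (A.mulVec x) ≤ (1 + δ) * sqNorm x}

/-- `(s₁,s₂,s₃)`-hierarchical sparsity of a 3-level block vector: at most `s₁`
of the `N₁` level-1 blocks are nonzero, within each block at most `s₂` of the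
`N₂` level-2 blocks are nonzero, and each of those contains at most `s₃`
nonzero entries. -/
def HiSparse3 {N₁ N₂ N₃ : ℕ} (s₁ s₂ s₃ : ℕ) (x : Fin N₁ × Fin N₂ × Fin N₃ → ℂ) : Prop :=
  (Finset.univ.filter fun i₁ : Fin N₁ => (fun p : Fin N₂ × Fin N₃ => x (i₁, p)) ≠ 0).card ≤ s₁ ∧
  ∀ i₁ : Fin N₁,
    (Finset.univ.filter fun i₂ : Fin N₂ => (fun i₃ : Fin N₃ => x (i₁, i₂, i₃)) ≠ 0).card ≤ s₂ ∧
    ∀ i₂ : Fin N₂, Sparse s₃ (fun i₃ : Fin N₃ => x (i₁, i₂, i₃))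

/-- The hierarchical restricted isometry constant `δ_{(s₁,s₂,s₃)}(A)` of a
matrix acting on 3-level block vectors. -/
def HiRIPconst3 {m : Type*} [Fintype m] {N₁ N₂ N₃ : ℕ}
    (A : Matrix m (Fin N₁ × Fin N₂ × Fin N₃) ℂ) (s₁ s₂ s₃ : ℕ) : ℝ :=
  sInf {δ : ℝ | 0 ≤ δ ∧ ∀ x : Fin N₁ × Fin N₂ × Fin N₃ → ℂ, HiSparse3 s₁ s₂ s₃ x →
    (1 - δ) * sqNorm x ≤ sqNorm (A.mulVec x) ∧ sqNorm (A.mulVec x) ≤ (1 + δ) * sqNorm x}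

/-
Write `x_j` for the level-1 blocks of `x`. Then `(A₁ ⊗ A₂) x` arises by applying `A₂` to every
block and then `A₁` to every row `y_r = ((A₂ x_j) r)_j` of the resulting array. For a
hierarchically sparse `x` each block is `s₂ s₃`-sparse, and each row `y_r` is `s₁`-sparse because
it vanishes off the nonzero blocks. So `∑_r ‖y_r‖² = ∑_j ‖A₂ x_j‖²` lies within `1 ± δ₂` of
`‖x‖²`, and `‖(A₁ ⊗ A₂) x‖² = ∑_r ‖A₁ y_r‖²` within `1 ± δ₁` of it; the two distortions compose
to `(1 + δ₁)(1 + δ₂) - 1`. The constants themselves are admissible, since the set of admissible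
`δ` is closed.
-/

open Matrix Kronecker

variable {ι κ m n : Type*} [Fintype ι] [Fintype κ] [Fintype m] [Fintype n]

lemma sqNorm_nonneg (x : ι → ℂ) : 0 ≤ sqNorm x :=
  Finset.sum_nonneg fun _ _ => sq_nonneg _

lemma sqNorm_prod (x : ι × κ → ℂ) : sqNorm x = ∑ i, sqNorm (Function.curry x i) :=
  Fintype.sum_prod_type _

lemma sqNorm_prod_swap (x : ι × κ → ℂ) : sqNorm x = ∑ k, sqNorm fun i => x (i, k) :=
  (Fintype.sum_prod_type _).trans Finset.sum_comm

lemma sqNorm_eq_norm_sq (x : ι → ℂ) : sqNorm x = ‖WithLp.toLp 2 x‖ ^ 2 :=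
  (EuclideanSpace.norm_sq_eq _).symm

lemma exists_sqNorm_mulVec_le (A : Matrix m n ℂ) : ∃ C, ∀ x, sqNorm (A *ᵥ x) ≤ C * sqNorm x := by
  let f := LinearMap.toContinuousLinearMap (Matrix.toEuclideanLin A)
  refine ⟨‖f‖ ^ 2, fun x => ?_⟩
  rw [sqNorm_eq_norm_sq, sqNorm_eq_norm_sq, ← mul_pow]
  exact pow_le_pow_left₀ (norm_nonneg _) (f.le_opNorm (WithLp.toLp 2 x)) 2

lemma Sparse.of_rows {y : ι × κ → ℂ} {a b : ℕ}
    (hrows : (Finset.univ.filter fun i => Function.curry y i ≠ 0).card ≤ a)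
    (hrow : ∀ i, Sparse b (Function.curry y i)) : Sparse (a * b) y := by
  set R := Finset.univ.filter fun i => Function.curry y i ≠ 0
  have hsub : (Finset.univ.filter fun p => y p ≠ 0) ⊆
      R.biUnion fun i => (Finset.univ.filter fun k => y (i, k) ≠ 0).image (Prod.mk i) := by
    rintro ⟨i, k⟩ hik
    simp only [Finset.mem_filter, Finset.mem_univ, true_and] at hik
    simp only [Finset.mem_biUnion, Finset.mem_image, Finset.mem_filter, Finset.mem_univ, true_and, R]
    exact ⟨i, fun h => hik (congrFun h k), k, hik, rfl⟩
  calc _ ≤ _ := Finset.card_le_card hsub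
    _ ≤ R.card * b := Finset.card_biUnion_le_card_mul _ _ _ fun i _ =>
        Finset.card_image_le.trans (hrow i)
    _ ≤ a * b := Nat.mul_le_mul_right _ hrows

def IsRelApprox (δ a b : ℝ) : Prop := (1 - δ) * a ≤ b ∧ b ≤ (1 + δ) * a

lemma IsRelApprox.sum {α : Type*} {s : Finset α} {δ : ℝ} {a b : α → ℝ}
    (h : ∀ i ∈ s, IsRelApprox δ (a i) (b i)) : IsRelApprox δ (∑ i ∈ s, a i) (∑ i ∈ s, b i) := by
  rw [IsRelApprox, Finset.mul_sum, Finset.mul_sum]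
  exact ⟨Finset.sum_le_sum fun i hi => (h i hi).1, Finset.sum_le_sum fun i hi => (h i hi).2⟩

lemma IsRelApprox.trans {δ₁ δ₂ a b c : ℝ} (hδ₁ : 0 ≤ δ₁) (hab : IsRelApprox δ₂ a b)
    (hbc : IsRelApprox δ₁ b c) : IsRelApprox ((1 + δ₁) * (1 + δ₂) - 1) a c := by
  obtain ⟨hab₁, hab₂⟩ := hab
  obtain ⟨hbc₁, hbc₂⟩ := hbc
  constructor
  · nlinarith [mul_le_mul_of_nonneg_left hab₂ hδ₁]
  · nlinarith [mul_le_mul_of_nonneg_left hab₂ (by linarith : (0 : ℝ) ≤ 1 + δ₁)]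

def IsRIPBound (A : Matrix m n ℂ) (P : (n → ℂ) → Prop) (δ : ℝ) : Prop :=
  ∀ x, P x → IsRelApprox δ (sqNorm x) (sqNorm (A *ᵥ x))

def ripSet (A : Matrix m n ℂ) (P : (n → ℂ) → Prop) : Set ℝ := {δ | 0 ≤ δ ∧ IsRIPBound A P δ}

lemma ripSet_nonempty (A : Matrix m n ℂ) (P : (n → ℂ) → Prop) : (ripSet A P).Nonempty := by
  obtain ⟨C, hC⟩ := exists_sqNorm_mulVec_le A
  refine ⟨max 1 C, by positivity, fun x _ => ⟨?_, ?_⟩⟩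
  · nlinarith [le_max_left 1 C, sqNorm_nonneg x, sqNorm_nonneg (A *ᵥ x)]
  · nlinarith [hC x, le_max_right 1 C, sqNorm_nonneg x]

lemma isClosed_ripSet (A : Matrix m n ℂ) (P : (n → ℂ) → Prop) : IsClosed (ripSet A P) := by
  simp only [ripSet, IsRIPBound, IsRelApprox, Set.ofPred_and, Set.ofPred_forall]
  exact isClosed_Ici.inter <| isClosed_iInter fun x => isClosed_iInter fun _ =>
    (isClosed_le (by fun_prop) continuous_const).inter (isClosed_le continuous_const (by fun_prop))

lemma sInf_ripSet_mem (A : Matrix m n ℂ) (P : (n → ℂ) → Prop) : sInf (ripSet A P) ∈ ripSet A P :=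
  (isClosed_ripSet A P).csInf_mem (ripSet_nonempty A P) ⟨0, fun _ h => h.1⟩

lemma kronecker_mulVec_apply {m₁ m₂ n₁ n₂ : Type*} [Fintype n₁] [Fintype n₂]
    (A₁ : Matrix m₁ n₁ ℂ) (A₂ : Matrix m₂ n₂ ℂ) (x : n₁ × n₂ → ℂ) (r : m₁ × m₂) :
    ((A₁ ⊗ₖ A₂) *ᵥ x) r = (A₁ *ᵥ fun j => (A₂ *ᵥ Function.curry x j) r.2) r.1 := by
  simp [mulVec, dotProduct, kroneckerMap_apply, Fintype.sum_prod_type, Finset.mul_sum, mul_assoc]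

lemma IsRIPBound.kronecker {m₁ m₂ n₁ n₂ : Type*} [Fintype m₁] [Fintype m₂] [Fintype n₁]
    [Fintype n₂] {A₁ : Matrix m₁ n₁ ℂ} {A₂ : Matrix m₂ n₂ ℂ} {P₁ : (n₁ → ℂ) → Prop}
    {P₂ : (n₂ → ℂ) → Prop} {Q : (n₁ × n₂ → ℂ) → Prop} {δ₁ δ₂ : ℝ} (hδ₁ : 0 ≤ δ₁)
    (h₁ : IsRIPBound A₁ P₁ δ₁) (h₂ : IsRIPBound A₂ P₂ δ₂)
    (hQ : ∀ x, Q x → (∀ j, P₂ (Function.curry x j)) ∧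
      ∀ r, P₁ fun j => (A₂ *ᵥ Function.curry x j) r) :
    IsRIPBound (A₁ ⊗ₖ A₂) Q ((1 + δ₁) * (1 + δ₂) - 1) := by
  intro x hx
  obtain ⟨hblocks, hrows⟩ := hQ x hx
  have hinner := IsRelApprox.sum (s := Finset.univ) fun j _ => h₂ _ (hblocks j)
  have houter := IsRelApprox.sum (s := Finset.univ) fun r _ => h₁ _ (hrows r)
  have hmid : ∑ j, sqNorm (A₂ *ᵥ Function.curry x j) =
      ∑ r, sqNorm fun j => (A₂ *ᵥ Function.curry x j) r := Finset.sum_comm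
  rw [← sqNorm_prod, hmid] at hinner
  convert hinner.trans hδ₁ houter using 1
  rw [sqNorm_prod_swap]
  simp_rw [kronecker_mulVec_apply]

lemma HiSparse3.sparse_curry {N₁ N₂ N₃ s₁ s₂ s₃ : ℕ} {x : Fin N₁ × Fin N₂ × Fin N₃ → ℂ}
    (hx : HiSparse3 s₁ s₂ s₃ x) (j : Fin N₁) : Sparse (s₂ * s₃) (Function.curry x j) :=
  Sparse.of_rows (hx.2 j).1 (hx.2 j).2

lemma sparse_mulVec_curry_apply {p : Type*} {x : ι × κ → ℂ} {s : ℕ}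
    (hx : (Finset.univ.filter fun i => Function.curry x i ≠ 0).card ≤ s) (B : Matrix p κ ℂ)
    (r : p) : Sparse s fun i => (B *ᵥ Function.curry x i) r := by
  refine (Finset.card_le_card (Finset.monotone_filter_right _ fun i _ hi h0 => hi ?_)).trans hx
  simp [h0]

lemma RIPconst_mem_ripSet (A : Matrix m n ℂ) (s : ℕ) : RIPconst A s ∈ ripSet A (Sparse s) :=
  sInf_ripSet_mem A (Sparse s)

lemma HiRIPconst3_le {N₁ N₂ N₃ s₁ s₂ s₃ : ℕ} {A : Matrix m (Fin N₁ × Fin N₂ × Fin N₃) ℂ} {δ : ℝ}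
    (hδ : δ ∈ ripSet A (HiSparse3 s₁ s₂ s₃)) : HiRIPconst3 A s₁ s₂ s₃ ≤ δ :=
  csInf_le ⟨0, fun _ h => h.1⟩ hδ

theorem hiRIP_kronecker_outer_general (M₁ M₂ N₁' N₂' N₃' s₁ s₂ s₃ : ℕ)
    (A₁ : Matrix (Fin M₁) (Fin N₁') ℂ) (A₂ : Matrix (Fin M₂) (Fin N₂' × Fin N₃') ℂ)
    (A : Matrix (Fin M₁ × Fin M₂) (Fin N₁' × Fin N₂' × Fin N₃') ℂ)
    (hA : A = fun r j => A₁ r.1 j.1 * A₂ r.2 j.2) :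
    HiRIPconst3 A s₁ s₂ s₃ ≤ (1 + RIPconst A₁ s₁) * (1 + RIPconst A₂ (s₂ * s₃)) - 1 := by
  obtain ⟨hδ₁, hA₁⟩ := RIPconst_mem_ripSet A₁ s₁
  obtain ⟨hδ₂, hA₂⟩ := RIPconst_mem_ripSet A₂ (s₂ * s₃)
  have hkron : IsRIPBound A (HiSparse3 s₁ s₂ s₃)
      ((1 + RIPconst A₁ s₁) * (1 + RIPconst A₂ (s₂ * s₃)) - 1) := by
    subst hA
    exact hA₁.kronecker hδ₁ hA₂ fun x hx => ⟨hx.sparse_curry, sparse_mulVec_curry_apply hx.1 A₂⟩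
  exact HiRIPconst3_le ⟨by nlinarith, hkron⟩

/-- For a Kronecker product `A = A₁ ⊗ A₂` acting on 3-level
block vectors in `ℂ^{N₁'·N₂'·N₃'}` with `N₁ = N₁'` and `N₂ = N₂'N₃'` (the
level-1 blocks correspond to the columns of `A₁`), one has
`δ_{(s₁,s₂,s₃)}(A₁ ⊗ A₂) ≤ (1 + δ_{s₁}(A₁))(1 + δ_{s₂s₃}(A₂)) − 1`. -/
theorem hiRIP_kronecker_outer (M₁ M₂ N₁' N₂' N₃' s₁ s₂ s₃ : ℕ)
    (hs₁ : 0 < s₁) (hs₂ : 0 < s₂) (hs₃ : 0 < s₃)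
    (hN₁ : s₁ ≤ N₁') (hN₂ : s₂ ≤ N₂') (hN₃ : s₃ ≤ N₃')
    (A₁ : Matrix (Fin M₁) (Fin N₁') ℂ) (A₂ : Matrix (Fin M₂) (Fin N₂' × Fin N₃') ℂ)
    (A : Matrix (Fin M₁ × Fin M₂) (Fin N₁' × Fin N₂' × Fin N₃') ℂ)
    (hA : A = fun r j => A₁ r.1 j.1 * A₂ r.2 j.2) :
    HiRIPconst3 A s₁ s₂ s₃ ≤ (1 + RIPconst A₁ s₁) * (1 + RIPconst A₂ (s₂ * s₃)) - 1 :=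
  hiRIP_kronecker_outer_general M₁ M₂ N₁' N₂' N₃' s₁ s₂ s₃ A₁ A₂ A hA
end
end

section
/- Let K ≥ 3 be an integer and let J be a strictly positive integer with J ≤ (K−1)/2. Then for every ω ∈ [0,1] and every vector u_{K,sp}(ω; J) obtained from u_K(ω) by keeping 2J+1 entries of largest modulus and zeroing the rest, ‖u_{K,sp}(ω; J) − u_K(ω)‖² ≤ 1/J, where ‖·‖ is the Euclidean norm. -/
open scoped Classical

noncomputable section

/-- The vector `u_K(ω) ∈ ℂ^K`, with entries
`[u_K(ω)]_k = (1/K) ∑_{j=0}^{K−1} e^{−2πi j (ω − k/K)}`. -/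
def uVec (K : ℕ) (ω : ℝ) : Fin K → ℂ := fun k =>
  (K : ℂ)⁻¹ * ∑ j : Fin K,
    Complex.exp (-(2 * (Real.pi : ℂ) * Complex.I * (j.1 : ℂ) * ((ω : ℂ) - (k.1 : ℂ) / (K : ℂ))))

/-- `v` is a sparsification of `u` keeping `2J+1` entries of largest modulus:
there is a set `S` of `2J+1` indices, each carrying modulus at least that of
any index outside `S`, such that `v` agrees with `u` on `S` and vanishes
elsewhere. -/
def IsSparsification {K : ℕ} (J : ℕ) (u v : Fin K → ℂ) : Prop :=
  ∃ S : Finset (Fin K), S.card = 2 * J + 1 ∧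
    (∀ k ∈ S, ∀ l ∉ S, ‖u l‖ ≤ ‖u k‖) ∧
    v = fun k => if k ∈ S then u k else 0

/-! Writing `x = ω - k / K`, the entry `K u_k` is a geometric sum of powers of `e^{-2πix}`, so
`‖u_k‖ ≤ 1 / (K |sin πx|) ≤ 1 / (2K dist(x, ℤ))`. Numbering the indices cyclically by their offset
`a` from the one nearest to `Kω`, we get `K dist(x, ℤ) ≥ min(a, K - a) - 1/2`. Keeping the
`2J + 1` indices with `|a| ≤ J` therefore leaves a squared error of at most
`2 ∑_{a > J} 1 / (2a - 1)^2 ≤ 1 / (2J)`, by telescoping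
`1 / (2a - 1)^2 ≤ 1 / (4(a - 1)) - 1 / (4a)`; keeping the `2J + 1` largest entries instead can
only make the error smaller. -/

open Finset

namespace Finset

variable {ι M : Type*} [AddCommMonoid M] [LinearOrder M] [IsOrderedCancelAddMonoid M]

theorem sum_le_sum_of_card_le_of_forall_le [DecidableEq ι] {f : ι → M} (hf : ∀ i, 0 ≤ f i)
    {S T : Finset ι} (hS : ∀ k ∈ S, ∀ l ∉ S, f l ≤ f k) (hcard : #T ≤ #S) :
    ∑ i ∈ T, f i ≤ ∑ i ∈ S, f i := by
  have hcard' : #(T \ S) ≤ #(S \ T) := by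
    have := card_sdiff_add_card_inter T S
    have := card_sdiff_add_card_inter S T
    rw [inter_comm] at this
    omega
  have hdiff : ∑ i ∈ T \ S, f i ≤ ∑ i ∈ S \ T, f i := by
    rcases (S \ T).eq_empty_or_nonempty with h | h
    · rw [h, card_empty, Nat.le_zero, card_eq_zero] at hcard'
      rw [hcard', h]
    · set c := (S \ T).inf' h f
      calc ∑ i ∈ T \ S, f i ≤ #(T \ S) • c :=
            sum_le_card_nsmul _ _ _ fun l hl =>
              le_inf' h _ fun k hk => hS k (mem_sdiff.1 hk).1 l (mem_sdiff.1 hl).2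
        _ ≤ #(S \ T) • c := nsmul_le_nsmul_left (le_inf' h _ fun k _ => hf k) hcard'
        _ ≤ ∑ i ∈ S \ T, f i := card_nsmul_le_sum _ _ _ fun k hk => inf'_le _ hk
  rw [← sum_inter_add_sum_sdiff T S, ← sum_inter_add_sum_sdiff S T, inter_comm]
  gcongr

theorem sum_compl_le_sum_compl_of_card_le_of_forall_le [Fintype ι] [DecidableEq ι]
    {f : ι → M} (hf : ∀ i, 0 ≤ f i) {S T : Finset ι}
    (hS : ∀ k ∈ S, ∀ l ∉ S, f l ≤ f k) (hcard : #T ≤ #S) :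
    ∑ i ∈ Sᶜ, f i ≤ ∑ i ∈ Tᶜ, f i := by
  have := sum_le_sum_of_card_le_of_forall_le hf hS hcard
  rw [← add_le_add_iff_right (∑ i ∈ S, f i), sum_compl_add_sum]
  calc ∑ i, f i = ∑ i ∈ Tᶜ, f i + ∑ i ∈ T, f i := (sum_compl_add_sum T f).symm
    _ ≤ _ := by gcongr

end Finset

theorem sum_range_inv_two_mul_add_one_sq_le {J : ℝ} (hJ : 0 < J) (n : ℕ) :
    ∑ i ∈ range n, 1 / (2 * (J + i) + 1) ^ 2 ≤ 1 / (4 * J) := by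
  set g : ℕ → ℝ := fun i => 1 / (4 * (J + i))
  have hterm (i : ℕ) : 1 / (2 * (J + i) + 1) ^ 2 ≤ g i - g (i + 1) := by
    have : 0 < J + i := by positivity
    simp only [g]; push_cast
    rw [div_sub_div _ _ (by positivity) (by positivity),
      div_le_div_iff₀ (by positivity) (by positivity)]
    nlinarith
  calc ∑ i ∈ range n, 1 / (2 * (J + i) + 1) ^ 2 ≤ ∑ i ∈ range n, (g i - g (i + 1)) :=
        sum_le_sum fun i _ => hterm i
    _ = g 0 - g n := sum_range_sub' g n
    _ ≤ 1 / (4 * J) := by simp only [g]; norm_num; positivity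

open Real in
theorem two_mul_abs_sub_round_le_abs_sin_pi_mul (x : ℝ) : 2 * |x - round x| ≤ |sin (π * x)| := by
  set y := x - round x
  have hy : |y| ≤ 1 / 2 := abs_sub_round x
  have hsin : |sin (π * x)| = sin (π * |y|) := by
    have hx : π * x = π * y + round x * π := by simp only [y]; ring
    have hπy : |π * y| ≤ π := by rw [abs_mul, abs_of_pos pi_pos]; nlinarith [pi_pos]
    rw [hx, sin_add_int_mul_pi, abs_mul, abs_neg_one_zpow, one_mul,
      abs_sin_eq_sin_abs_of_abs_le_pi hπy, abs_mul, abs_of_pos pi_pos]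
  rw [hsin]
  calc 2 * |y| = 2 / π * (π * |y|) := by field_simp
    _ ≤ sin (π * |y|) := mul_le_sin (by positivity) (by nlinarith [pi_pos])

theorem norm_uVec_mul_abs_sin_le_one (K : ℕ) (ω : ℝ) (k : Fin K) :
    ‖uVec K ω k‖ * (K * |Real.sin (Real.pi * (ω - k / K))|) ≤ 1 := by
  set x := ω - k / K
  set z : ℂ := Complex.exp (Complex.I * ↑(-(2 * Real.pi * x)))
  have hz : ‖z‖ = 1 := Complex.norm_exp_I_mul_ofReal _
  have hK0 : (K : ℂ) ≠ 0 := Nat.cast_ne_zero.2 k.pos.ne'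
  have hK : (K : ℂ) * uVec K ω k = ∑ j ∈ range K, z ^ j := by
    rw [uVec, ← mul_assoc, mul_inv_cancel₀ hK0, one_mul,
      ← Fin.sum_univ_eq_sum_range (fun j => z ^ j)]
    refine sum_congr rfl fun j _ => ?_
    rw [← Complex.exp_nat_mul]
    congr 1
    simp only [x]; push_cast; ring
  have hz1 : ‖z - 1‖ = 2 * |Real.sin (Real.pi * x)| := by
    rw [Complex.norm_exp_I_mul_ofReal_sub_one, norm_mul,
      show -(2 * Real.pi * x) / 2 = -(Real.pi * x) by ring, Real.sin_neg, norm_neg]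
    simp
  have : ‖uVec K ω k‖ * K * ‖z - 1‖ ≤ 2 :=
    calc ‖uVec K ω k‖ * K * ‖z - 1‖ = ‖z ^ K - 1‖ := by
          rw [← geom_sum_mul, ← hK, norm_mul, norm_mul, Complex.norm_natCast]; ring
      _ ≤ ‖z ^ K‖ + ‖(1 : ℂ)‖ := norm_sub_le _ _
      _ = 2 := by rw [norm_pow, hz]; norm_num
  rw [hz1] at this
  linarith

theorem Int.min_le_abs_add_mul {a K : ℤ} (ha : 0 ≤ a) (haK : a ≤ K) (p : ℤ) :
    min a (K - a) ≤ |a + K * p| := by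
  rcases le_or_gt 0 p with hp | hp
  · exact (min_le_left _ _).trans (by nlinarith [le_abs_self (a + K * p)])
  · exact (min_le_right _ _).trans (by nlinarith [neg_abs_le (a + K * p)])

theorem norm_uVec_mul_le_one_of_dvd_sub {K : ℕ} {ω : ℝ} {c : ℤ} (hc : |K * ω - c| ≤ 1 / 2)
    (k : Fin K) {a : ℤ} (hk : (K : ℤ) ∣ k - c - a) (ha : 0 ≤ a) (haK : a ≤ K) :
    ‖uVec K ω k‖ * (2 * min a (K - a) - 1) ≤ 1 := by
  obtain ⟨q, hq⟩ := hk
  set x : ℝ := ω - k / K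
  set n := round x
  have hKx : K * (x - n) = (K * ω - c) - (a + K * (q + n) : ℤ) := by
    have hK0 : (K : ℝ) ≠ 0 := Nat.cast_ne_zero.2 k.pos.ne'
    have : (k : ℝ) = c + a + K * q := by exact_mod_cast (by omega : (k : ℤ) = c + a + K * q)
    simp only [x]; push_cast; field_simp; linarith
  have hdist : 2 * (min a (K - a) : ℝ) - 1 ≤ K * (2 * |x - n|) := by
    have hmin : (min a (K - a) : ℝ) ≤ |((a + K * (q + n) : ℤ) : ℝ)| := by
      rw [← Int.cast_abs]; exact_mod_cast Int.min_le_abs_add_mul ha haK (q + n)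
    have := abs_sub_abs_le_abs_sub ((a + K * (q + n) : ℤ) : ℝ) (K * ω - c)
    rw [abs_sub_comm ((a + K * (q + n) : ℤ) : ℝ), ← hKx, abs_mul, Nat.abs_cast] at this
    linarith
  calc ‖uVec K ω k‖ * (2 * min a (K - a) - 1) ≤ ‖uVec K ω k‖ * (K * (2 * |x - n|)) := by
        gcongr; exact_mod_cast hdist
    _ ≤ ‖uVec K ω k‖ * (K * |Real.sin (Real.pi * x)|) := by
        gcongr; exact two_mul_abs_sub_round_le_abs_sin_pi_mul x
    _ ≤ 1 := norm_uVec_mul_abs_sin_le_one K ω k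

theorem norm_uVec_sq_le_of_dvd_sub {K : ℕ} {ω : ℝ} {c : ℤ} (hc : |K * ω - c| ≤ 1 / 2) (k : Fin K)
    {a : ℤ} (hk : (K : ℤ) ∣ k - c - a) (ha : 1 ≤ a) (haK : a ≤ K - 1) :
    ‖uVec K ω k‖ ^ 2 ≤ 1 / (2 * a - 1) ^ 2 + 1 / (2 * (K - a) - 1) ^ 2 := by
  have h := norm_uVec_mul_le_one_of_dvd_sub hc k hk (by omega) (by omega)
  have ha' : (1 : ℝ) ≤ a := by exact_mod_cast ha
  have haK' : (a : ℝ) ≤ K - 1 := by exact_mod_cast haK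
  have key {m : ℝ} (hm : 1 ≤ m) (hu : ‖uVec K ω k‖ * m ≤ 1) : ‖uVec K ω k‖ ^ 2 ≤ 1 / m ^ 2 := by
    rw [← one_div_pow]
    gcongr
    rwa [le_div_iff₀ (by linarith)]
  rcases min_choice a (K - a) with hmin | hmin <;> rw [hmin] at h <;> push_cast at h
  · have := key (by linarith) h
    have : 0 ≤ 1 / (2 * ((K : ℝ) - a) - 1) ^ 2 := by positivity
    linarith
  · have := key (by linarith) h
    have : 0 ≤ 1 / (2 * (a : ℝ) - 1) ^ 2 := by positivity
    linarith

theorem sum_range_inv_sq_add_inv_sq_le {J : ℕ} (hJ : 0 < J) (K : ℕ) :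
    ∑ i ∈ range (K - (2 * J + 1)),
      (1 / (2 * ((J : ℝ) + 1 + i) - 1) ^ 2 + 1 / (2 * ((K : ℝ) - (J + 1 + i)) - 1) ^ 2)
      ≤ 1 / (2 * (J : ℝ)) := by
  set n := K - (2 * J + 1)
  have hJ' : (0 : ℝ) < J := by exact_mod_cast hJ
  have hbound := sum_range_inv_two_mul_add_one_sq_le hJ' n
  have hfirst : ∑ i ∈ range n, 1 / (2 * ((J : ℝ) + 1 + i) - 1) ^ 2
      = ∑ i ∈ range n, 1 / (2 * ((J : ℝ) + i) + 1) ^ 2 :=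
    sum_congr rfl fun i _ => by ring_nf
  have hsecond : ∑ i ∈ range n, 1 / (2 * ((K : ℝ) - (J + 1 + i)) - 1) ^ 2
      = ∑ i ∈ range n, 1 / (2 * ((J : ℝ) + i) + 1) ^ 2 := by
    rw [← sum_range_reflect]
    refine sum_congr rfl fun i hi => ?_
    have hin : i < n := mem_range.1 hi
    have hK : (K : ℝ) = n + 2 * J + 1 := by exact_mod_cast (by omega : K = n + 2 * J + 1)
    have hni : ((n - 1 - i : ℕ) : ℝ) = n - 1 - i := by
      rw [Nat.cast_sub (by omega), Nat.cast_sub (by omega), Nat.cast_one]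
    rw [hni, hK]
    ring_nf
  rw [sum_add_distrib, hfirst, hsecond]
  calc _ ≤ 1 / (4 * (J : ℝ)) + 1 / (4 * J) := add_le_add hbound hbound
    _ = 1 / (2 * J) := by field_simp; ring

theorem exists_card_le_sum_compl_norm_uVec_sq_le {J : ℕ} (hJ : 0 < J) (K : ℕ) (ω : ℝ) :
    ∃ T : Finset (Fin K), #T ≤ 2 * J + 1 ∧ ∑ k ∈ Tᶜ, ‖uVec K ω k‖ ^ 2 ≤ 1 / (2 * (J : ℝ)) := by
  set c := round (K * ω)
  set n := K - (2 * J + 1)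
  -- `i k` is the cyclic position of `k` counted from `c + J + 1`, the first index after the
  -- `2J + 1` indices nearest to `Kω`; those are the `k` with `n ≤ i k`.
  set i : Fin K → ℕ := fun k => ((k - c - (J + 1)) % K).toNat
  have hi_cast (k : Fin K) : (i k : ℤ) = (k - c - (J + 1)) % K :=
    Int.toNat_of_nonneg (Int.emod_nonneg _ (by exact_mod_cast k.pos.ne'))
  have hi_lt (k : Fin K) : i k < K := by
    have := Int.emod_lt_of_pos ((k : ℤ) - c - (J + 1)) (Int.natCast_pos.2 k.pos)
    have := hi_cast k
    omega
  have hi_dvd (k : Fin K) : (K : ℤ) ∣ k - c - (J + 1 + i k) :=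
    ⟨(k - c - (J + 1)) / K, by
      linarith [hi_cast k, Int.mul_ediv_add_emod ((k : ℤ) - c - (J + 1)) K]⟩
  have hi_inj : Function.Injective i := by
    intro k k' h
    have hdvd : (K : ℤ) ∣ k - k' := by
      simpa [h] using dvd_sub (hi_dvd k) (hi_dvd k')
    have : (k : ℤ) - k' = 0 := Int.eq_zero_of_abs_lt_dvd hdvd (by rw [abs_lt]; omega)
    exact Fin.ext (by omega)
  set ψ : ℕ → ℝ := fun j =>
    1 / (2 * ((J : ℝ) + 1 + j) - 1) ^ 2 + 1 / (2 * ((K : ℝ) - (J + 1 + j)) - 1) ^ 2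
  refine ⟨univ.filter (n ≤ i ·), ?_, ?_⟩
  · calc _ ≤ #(Ico n K) := card_le_card_of_injOn i (fun k hk => by simp_all) hi_inj.injOn
      _ ≤ 2 * J + 1 := by simp only [Nat.card_Ico]; omega
  have hterm : ∀ k ∈ (univ.filter (n ≤ i ·))ᶜ, ‖uVec K ω k‖ ^ 2 ≤ ψ (i k) := by
    intro k hk
    have hk : i k < n := by simpa using hk
    have := norm_uVec_sq_le_of_dvd_sub (abs_sub_round ((K : ℝ) * ω)) k (hi_dvd k)
      (by omega) (by omega)
    push_cast at this
    exact this
  calc _ ≤ ∑ k ∈ (univ.filter (n ≤ i ·))ᶜ, ψ (i k) := sum_le_sum hterm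
    _ = ∑ j ∈ (univ.filter (n ≤ i ·))ᶜ.image i, ψ j := (sum_image fun _ _ _ _ h => hi_inj h).symm
    _ ≤ ∑ j ∈ range n, ψ j :=
        sum_le_sum_of_subset_of_nonneg (fun j hj => by simp at hj ⊢; omega)
          fun _ _ _ => by positivity
    _ ≤ 1 / (2 * (J : ℝ)) := sum_range_inv_sq_add_inv_sq_le hJ K

theorem sqNorm_indicator_sub {ι : Type*} [Fintype ι] [DecidableEq ι] (u : ι → ℂ) (S : Finset ι) :
    sqNorm ((fun k => if k ∈ S then u k else 0) - u) = ∑ k ∈ Sᶜ, ‖u k‖ ^ 2 := by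
  rw [sqNorm, ← sum_add_sum_compl S, sum_eq_zero fun k hk => by simp [hk], zero_add]
  exact sum_congr rfl fun k hk => by simp [mem_compl.1 hk]

theorem sparsification_error_general (K : ℕ) (J : ℕ) (hJ : 0 < J) :
    ∀ ω ∈ Set.Icc (0 : ℝ) 1, ∀ v : Fin K → ℂ, IsSparsification J (uVec K ω) v →
      sqNorm (v - uVec K ω) ≤ 1 / (J : ℝ) := by
  rintro ω - v ⟨S, hS, htop, rfl⟩
  obtain ⟨T, hT, htail⟩ := exists_card_le_sum_compl_norm_uVec_sq_le hJ K ω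
  have hJ' : (0 : ℝ) < J := by exact_mod_cast hJ
  calc sqNorm _ = ∑ k ∈ Sᶜ, ‖uVec K ω k‖ ^ 2 := sqNorm_indicator_sub _ S
    _ ≤ ∑ k ∈ Tᶜ, ‖uVec K ω k‖ ^ 2 :=
        sum_compl_le_sum_compl_of_card_le_of_forall_le (fun _ => by positivity)
          (fun k hk l hl => by gcongr; exact htop k hk l hl) (hS ▸ hT)
    _ ≤ 1 / (2 * (J : ℝ)) := htail
    _ ≤ 1 / (J : ℝ) := by gcongr; linarith

/-- For `K ≥ 3`, `1 ≤ J ≤ (K−1)/2`, every `ω ∈ [0,1]` and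
every sparsification of `u_K(ω)` keeping `2J+1` entries of largest modulus,
the squared Euclidean error satisfies `‖u_{K,sp}(ω;J) − u_K(ω)‖² ≤ 1/J`. -/
theorem sparsification_error (K : ℕ) (hK : 3 ≤ K) (J : ℕ) (hJ : 0 < J)
    (hJK : (J : ℝ) ≤ ((K : ℝ) - 1) / 2) :
    ∀ ω ∈ Set.Icc (0 : ℝ) 1, ∀ v : Fin K → ℂ, IsSparsification J (uVec K ω) v →
      sqNorm (v - uVec K ω) ≤ 1 / (J : ℝ) :=
  sparsification_error_general K J hJ
end
end
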